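/- arXiv:1202.0100 — 3 statements merged into one kernel-verified Lean document; each statement's English description precedes it below -/
import Mathlib

section
/- Let Σ be an n×n real symmetric positive definite matrix, X an n×m real matrix with Xᵀ Σ⁻¹ X invertible, and C a q×m real matrix. Set M = C (Xᵀ Σ⁻¹ X)⁻¹. Then for every q×n real matrix A satisfying the unbiasedness condition A X = C, the variance decomposition A Σ Aᵀ = (A − M Xᵀ Σ⁻¹) Σ (A − M Xᵀ Σ⁻¹)ᵀ + M (Xᵀ Σ⁻¹ X) Mᵀ holds. -/
/-!
Write `B = M Xᵀ Σ⁻¹` for the generalized least squares estimator. Since `Σ Bᵀ = X Mᵀ`, the cross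
term `(A - B) Σ Bᵀ` equals `(A X - M Xᵀ Σ⁻¹ X) Mᵀ = (C - C) Mᵀ = 0` for every unbiased `A`, so
`A Σ Aᵀ` splits Pythagoras-style as `(A - B) Σ (A - B)ᵀ + B Σ Bᵀ`, and `B Σ Bᵀ = M (Xᵀ Σ⁻¹ X) Mᵀ`.
-/

open Matrix

namespace Matrix

variable {R : Type*} [CommRing R] {k l m n : Type*} [Fintype n]

theorem mul_mul_transpose_eq_sub_add_of_orthogonal {S : Matrix n n R} (hS : Sᵀ = S)
    {A B : Matrix m n R} (h : (A - B) * S * Bᵀ = 0) :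
    A * S * Aᵀ = (A - B) * S * (A - B)ᵀ + B * S * Bᵀ := by
  have h' : B * S * (A - B)ᵀ = 0 := by
    simpa only [transpose_mul, transpose_transpose, hS, Matrix.mul_assoc, transpose_zero]
      using congrArg transpose h
  calc A * S * Aᵀ = ((A - B) + B) * S * ((A - B) + B)ᵀ := by rw [sub_add_cancel]
    _ = (A - B) * S * (A - B)ᵀ + B * S * Bᵀ := by
      rw [transpose_add, Matrix.add_mul, Matrix.add_mul, Matrix.mul_add, Matrix.mul_add, h, h']
      abel

theorem mul_mul_transpose_mul_mul_nonsing_inv [Fintype m] [DecidableEq n] {S : Matrix n n R}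
    (hS : Sᵀ = S) (hdet : IsUnit S.det) (P : Matrix k n R) (M : Matrix l m R)
    (X : Matrix n m R) : P * S * (M * Xᵀ * S⁻¹)ᵀ = P * X * Mᵀ := by
  rw [transpose_mul, transpose_mul, transpose_transpose, transpose_nonsing_inv, hS,
    ← Matrix.mul_assoc, mul_nonsing_inv_cancel_right _ _ hdet, Matrix.mul_assoc]

end Matrix

/-- Variance decomposition: for `M = C (Xᵀ S⁻¹ X)⁻¹` (with `S` the symmetric
positive definite matrix Σ and `Xᵀ S⁻¹ X` invertible), every matrix `A` with
`A X = C` (unbiasedness) satisfies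
`A S Aᵀ = (A − M Xᵀ S⁻¹) S (A − M Xᵀ S⁻¹)ᵀ + M (Xᵀ S⁻¹ X) Mᵀ`. -/
theorem stmt_8 {n m q : ℕ} (S : Matrix (Fin n) (Fin n) ℝ) (hS : S.PosDef)
    (X : Matrix (Fin n) (Fin m) ℝ) (hinv : IsUnit (Xᵀ * S⁻¹ * X))
    (C : Matrix (Fin q) (Fin m) ℝ) (M : Matrix (Fin q) (Fin m) ℝ)
    (hM : M = C * (Xᵀ * S⁻¹ * X)⁻¹) :
    ∀ A : Matrix (Fin q) (Fin n) ℝ, A * X = C →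
      A * S * Aᵀ =
        (A - M * Xᵀ * S⁻¹) * S * (A - M * Xᵀ * S⁻¹)ᵀ +
          M * (Xᵀ * S⁻¹ * X) * Mᵀ := by
  intro A hA
  have hsymm : Sᵀ = S := by
    simpa only [IsHermitian, conjTranspose_eq_transpose_of_trivial] using hS.isHermitian
  have hcancel (P : Matrix (Fin q) (Fin n) ℝ) :=
    mul_mul_transpose_mul_mul_nonsing_inv hsymm hS.det_pos.ne'.isUnit P M X
  have hMG : M * (Xᵀ * S⁻¹ * X) = C := by
    rw [hM, nonsing_inv_mul_cancel_right _ _ ((isUnit_iff_isUnit_det _).mp hinv)]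
  have horth : (A - M * Xᵀ * S⁻¹) * S * (M * Xᵀ * S⁻¹)ᵀ = 0 := by
    rw [hcancel, Matrix.sub_mul, hA, Matrix.mul_assoc M, Matrix.mul_assoc M,
      hMG, sub_self, Matrix.zero_mul]
  have hBSB : M * Xᵀ * S⁻¹ * S * (M * Xᵀ * S⁻¹)ᵀ = M * (Xᵀ * S⁻¹ * X) * Mᵀ := by
    rw [hcancel, Matrix.mul_assoc M, Matrix.mul_assoc M]
  rw [← hBSB]
  exact mul_mul_transpose_eq_sub_add_of_orthogonal hsymm horth
end

section
/- (Uniqueness in the Modified Gauss–Markov theorem.) Let Σ be an n×n real symmetric positive definite matrix, X an n×m real matrix with Xᵀ Σ⁻¹ X invertible, and C a q×m real matrix. If a q×n real matrix A satisfies A X = C and A Σ Aᵀ = C (Xᵀ Σ⁻¹ X)⁻¹ Cᵀ, then A = C (Xᵀ Σ⁻¹ X)⁻¹ Xᵀ Σ⁻¹. -/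
/-!
Write `G = Xᵀ S⁻¹ X` and `B = C G⁻¹ Xᵀ S⁻¹`. For every `A` with `A X = C` one computes
`A S Bᵀ = A X G⁻¹ Cᵀ = C G⁻¹ Cᵀ`; as `B X = C`, this also holds for `A = B`. Expanding,
`(A - B) S (A - B)ᵀ = A S Aᵀ - C G⁻¹ Cᵀ`, which vanishes by hypothesis, and a congruence
`M S Mᵀ` by a positive definite `S` vanishes only for `M = 0`.
-/

open Matrix

namespace Matrix

section Positivity

variable {m n R : Type*} [Fintype n]

theorem mul_mul_conjTranspose_apply_self [NonUnitalSemiring R] [StarRing R]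
    (M : Matrix m n R) (S : Matrix n n R) (i : m) :
    (M * S * Mᴴ) i i = M i ⬝ᵥ S *ᵥ star (M i) := by
  rw [Matrix.mul_assoc, mul_apply']
  rfl

variable [Ring R] [PartialOrder R] [StarRing R]

theorem PosDef.eq_zero_of_mul_mul_conjTranspose_eq_zero {S : Matrix n n R} (hS : S.PosDef)
    {M : Matrix m n R} (h : M * S * Mᴴ = 0) : M = 0 := by
  funext i
  by_contra hi
  have hpos := hS.dotProduct_mulVec_pos (star_ne_zero.mpr hi)
  rw [star_star, ← mul_mul_conjTranspose_apply_self, h] at hpos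
  exact lt_irrefl _ hpos

theorem PosDef.eq_of_mul_mul_conjTranspose_eq {S : Matrix n n R} (hS : S.PosDef)
    {A B : Matrix m n R} (hAB : A * S * Bᴴ = B * S * Bᴴ) (hAA : A * S * Aᴴ = B * S * Bᴴ) :
    A = B := by
  have hBA : B * S * Aᴴ = B * S * Bᴴ := by
    simpa only [conjTranspose_mul, conjTranspose_conjTranspose, hS.isHermitian.eq,
      Matrix.mul_assoc] using congrArg (·ᴴ) hAB
  refine sub_eq_zero.mp (hS.eq_zero_of_mul_mul_conjTranspose_eq_zero ?_)
  calc (A - B) * S * (A - B)ᴴ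
      = A * S * Aᴴ - A * S * Bᴴ - (B * S * Aᴴ - B * S * Bᴴ) := by
        simp only [conjTranspose_sub, Matrix.sub_mul, Matrix.mul_sub]; abel
    _ = 0 := by rw [hAA, hAB, hBA]; abel

end Positivity

section GaussMarkov

variable {n p q K : Type*} [Fintype n] [DecidableEq n] [Fintype p] [DecidableEq p] [CommRing K]

noncomputable def gaussMarkovMatrix (S : Matrix n n K) (X : Matrix n p K) (C : Matrix q p K) :
    Matrix q n K :=
  C * (Xᵀ * S⁻¹ * X)⁻¹ * Xᵀ * S⁻¹

theorem gaussMarkovMatrix_mul {S : Matrix n n K} {X : Matrix n p K}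
    (hG : IsUnit (Xᵀ * S⁻¹ * X).det) (C : Matrix q p K) : gaussMarkovMatrix S X C * X = C :=
  calc C * (Xᵀ * S⁻¹ * X)⁻¹ * Xᵀ * S⁻¹ * X = C * ((Xᵀ * S⁻¹ * X)⁻¹ * (Xᵀ * S⁻¹ * X)) := by
        simp only [Matrix.mul_assoc]
    _ = C := by rw [nonsing_inv_mul _ hG, Matrix.mul_one]

theorem mul_mul_transpose_gaussMarkovMatrix [Fintype q] {S : Matrix n n K} (hS : S.IsSymm)
    (hSdet : IsUnit S.det) {X : Matrix n p K} {C : Matrix q p K} {A : Matrix q n K}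
    (hAX : A * X = C) :
    A * S * (gaussMarkovMatrix S X C)ᵀ = C * (Xᵀ * S⁻¹ * X)⁻¹ * Cᵀ := by
  have hG : (Xᵀ * S⁻¹ * X).IsSymm := by
    simp [IsSymm, transpose_mul, hS.inv.eq, Matrix.mul_assoc]
  calc A * S * (gaussMarkovMatrix S X C)ᵀ
      = A * (S * S⁻¹) * X * (Xᵀ * S⁻¹ * X)⁻¹ * Cᵀ := by
        simp only [gaussMarkovMatrix, transpose_mul, hS.inv.eq, hG.inv.eq, transpose_transpose]
        simp only [Matrix.mul_assoc]
    _ = C * (Xᵀ * S⁻¹ * X)⁻¹ * Cᵀ := by rw [mul_nonsing_inv _ hSdet, Matrix.mul_one, hAX]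

end GaussMarkov

end Matrix

/-- Uniqueness in the Modified Gauss–Markov theorem: if `A X = C` and
`A S Aᵀ = C (Xᵀ S⁻¹ X)⁻¹ Cᵀ` (with `S` the symmetric positive definite matrix
Σ and `Xᵀ S⁻¹ X` invertible), then `A = C (Xᵀ S⁻¹ X)⁻¹ Xᵀ S⁻¹`. -/
theorem stmt_10 {n m q : ℕ} (S : Matrix (Fin n) (Fin n) ℝ) (hS : S.PosDef)
    (X : Matrix (Fin n) (Fin m) ℝ) (hinv : IsUnit (Xᵀ * S⁻¹ * X))
    (C : Matrix (Fin q) (Fin m) ℝ) (A : Matrix (Fin q) (Fin n) ℝ)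
    (hAX : A * X = C)
    (hvar : A * S * Aᵀ = C * (Xᵀ * S⁻¹ * X)⁻¹ * Cᵀ) :
    A = C * (Xᵀ * S⁻¹ * X)⁻¹ * Xᵀ * S⁻¹ := by
  have hSymm : S.IsSymm := isHermitian_iff_isSymm.mp hS.isHermitian
  have hSdet : IsUnit S.det := isUnit_iff_ne_zero.mpr hS.det_pos.ne'
  have hGdet : IsUnit (Xᵀ * S⁻¹ * X).det := (isUnit_iff_isUnit_det _).mp hinv
  have hBB := mul_mul_transpose_gaussMarkovMatrix hSymm hSdet (gaussMarkovMatrix_mul hGdet C)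
  have hAB := mul_mul_transpose_gaussMarkovMatrix hSymm hSdet hAX
  simp only [← conjTranspose_eq_transpose_of_trivial] at hvar hBB hAB
  exact hS.eq_of_mul_mul_conjTranspose_eq (hAB.trans hBB.symm) (hvar.trans hBB.symm)
end

section
/- Let q ≥ 1 and let α_1, …, α_q be real numbers; set α_j = 0 for j > q. Define the interim multipliers (β_k)_{k≥0} recursively by β_0 = 1 and β_k = Σ_{j=1}^{k} β_{k−j} α_j for k ≥ 1. If r := |α_1| + |α_2| + ⋯ + |α_q| < 1, then |β_k| ≤ r^{⌈k/q⌉} for every k ≥ 0; consequently the series Σ_{k=0}^{∞} β_k converges absolutely, so the long-run multiplier φ_∞ = Σ_{k=0}^{∞} β_k is finite (bounded). -/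
open Finset

/-! Each `β_k` is a combination of `β_{k-1}, …, β_{k-q}` with weights of total absolute
value `r`, so stepping back at most `q` indices costs a factor `r`: the bound `r ^ ⌈k/q⌉`
propagates by strong induction. Being constant on blocks of `q` consecutive indices, this
bound is summable as `q` copies of a geometric series. -/

theorem Nat.ceil_natCast_div_natCast_eq_ceilDiv {K : Type*} [Semifield K] [LinearOrder K]
    [IsStrictOrderedRing K] [FloorSemiring K] (k q : ℕ) : ⌈(k : K) / q⌉₊ = k ⌈/⌉ q := by
  rcases q.eq_zero_or_pos with rfl | hq
  · simp
  refine eq_of_forall_ge_iff fun c => ?_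
  rw [Nat.ceil_le, div_le_iff₀ (by exact_mod_cast hq), ceilDiv_le_iff_le_mul hq, mul_comm]
  exact_mod_cast Iff.rfl

theorem Nat.ceilDiv_le_ceilDiv_sub_add_one {j q : ℕ} (k : ℕ) (hjq : j ≤ q) :
    k ⌈/⌉ q ≤ (k - j) ⌈/⌉ q + 1 := by
  rcases q.eq_zero_or_pos with rfl | hq
  · simp
  have := le_smul_ceilDiv (b := k - j) hq
  rw [smul_eq_mul] at this
  rw [ceilDiv_le_iff_le_mul hq, mul_add_one]
  omega

theorem summable_pow_ceilDiv {r : ℝ} (hr0 : 0 ≤ r) (hr1 : r < 1) {q : ℕ} (hq : 0 < q) :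
    Summable fun k => r ^ (k ⌈/⌉ q) := by
  have : NeZero q := ⟨hq.ne'⟩
  have hblocks : Summable fun p : ℕ × Fin q => r ^ p.1 := by
    simpa using (summable_geometric_of_lt_one hr0 hr1).mul_of_nonneg
      (Summable.of_finite (f := fun _ : Fin q => (1 : ℝ))) (fun _ => by positivity)
      (fun _ => zero_le_one)
  have hfloor : Summable fun k => r ^ (k / q) := by
    rw [← (Nat.divModEquiv q).symm.summable_iff]
    convert hblocks using 2 with p
    rw [Function.comp_apply, Nat.divModEquiv_symm_apply, add_comm, Nat.add_mul_div_right _ _ hq,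
      Nat.div_eq_of_lt p.2.isLt, zero_add]
  exact hfloor.of_nonneg_of_le (fun _ => by positivity)
    fun k => pow_le_pow_of_le_one hr0 hr1.le floorDiv_le_ceilDiv

theorem sum_Icc_le_of_eq_zero {f : ℕ → ℝ} {q : ℕ} (hf0 : ∀ j, 0 ≤ f j)
    (hf : ∀ j, q < j → f j = 0) (k : ℕ) : ∑ j ∈ Icc 1 k, f j ≤ ∑ j ∈ Icc 1 q, f j := by
  rcases le_total k q with hkq | hqk
  · exact sum_le_sum_of_subset_of_nonneg (Icc_subset_Icc_right hkq) fun j _ _ => hf0 j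
  · refine (sum_subset (Icc_subset_Icc_right hqk) fun j hjk hjq => hf j ?_).ge
    simp only [mem_Icc] at hjk hjq
    omega

theorem abs_le_pow_ceilDiv_of_eq_sum_mul {q : ℕ} {α β : ℕ → ℝ} {r : ℝ}
    (hα : ∀ j, q < j → α j = 0) (hβ0 : |β 0| ≤ 1)
    (hβ : ∀ k, 1 ≤ k → β k = ∑ j ∈ Icc 1 k, β (k - j) * α j)
    (hr : ∑ j ∈ Icc 1 q, |α j| ≤ r) (hr1 : r ≤ 1) (k : ℕ) :
    |β k| ≤ r ^ (k ⌈/⌉ q) := by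
  have hr0 : 0 ≤ r := (sum_nonneg fun j _ => abs_nonneg (α j)).trans hr
  induction k using Nat.strong_induction_on with
  | _ k ih =>
  rcases k.eq_zero_or_pos with rfl | hk
  · simpa using hβ0
  set c := k ⌈/⌉ q
  have hterm : ∀ j ∈ Icc 1 k, |β (k - j) * α j| ≤ r ^ (c - 1) * |α j| := by
    intro j hj
    rw [abs_mul]
    rcases le_or_gt j q with hjq | hjq
    · have hc : c - 1 ≤ (k - j) ⌈/⌉ q := by
        have := Nat.ceilDiv_le_ceilDiv_sub_add_one k hjq
        omega
      have hlt : k - j < k := by simp only [mem_Icc] at hj; omega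
      gcongr
      exact (ih _ hlt).trans (pow_le_pow_of_le_one hr0 hr1 hc)
    · simp [hα j hjq]
  calc |β k| ≤ ∑ j ∈ Icc 1 k, |β (k - j) * α j| := hβ k hk ▸ abs_sum_le_sum_abs _ _
    _ ≤ r ^ (c - 1) * ∑ j ∈ Icc 1 k, |α j| := by rw [mul_sum]; exact sum_le_sum hterm
    _ ≤ r ^ (c - 1) * r := by
        gcongr
        refine (sum_Icc_le_of_eq_zero (fun j => abs_nonneg _) (fun j hj => ?_) k).trans hr
        simp [hα j hj]
    -- `c - 1` truncates at `c = 0` (possible only for `q = 0`), where `r ≤ 1` suffices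
    _ ≤ r ^ c := by cases c <;> simp [pow_succ, hr1]

/-- If `r = |α_1| + ⋯ + |α_q| < 1`, then the interim multipliers `β_k`
(defined by `β_0 = 1` and `β_k = Σ_{j=1}^{k} β_{k−j} α_j`, where `α_j = 0` for
`j > q`) satisfy `|β_k| ≤ r^⌈k/q⌉` for every `k`; consequently the series
`Σ_{k=0}^∞ β_k` converges absolutely, so the long-run multiplier is finite. -/
theorem stmt_13 (q : ℕ) (hq : 1 ≤ q) (α : ℕ → ℝ) (hα : ∀ j, q < j → α j = 0)
    (β : ℕ → ℝ) (hβ0 : β 0 = 1)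
    (hβ : ∀ k, 1 ≤ k → β k = ∑ j ∈ Finset.Icc 1 k, β (k - j) * α j)
    (r : ℝ) (hr : r = ∑ j ∈ Finset.Icc 1 q, |α j|) (hr1 : r < 1) :
    (∀ k : ℕ, |β k| ≤ r ^ (⌈(k : ℚ) / (q : ℚ)⌉.toNat)) ∧
      Summable fun k => |β k| := by
  have hr0 : 0 ≤ r := hr ▸ sum_nonneg fun j _ => abs_nonneg (α j)
  have hbound : ∀ k, |β k| ≤ r ^ (k ⌈/⌉ q) :=
    abs_le_pow_ceilDiv_of_eq_sum_mul hα (by simp [hβ0]) hβ hr.ge hr1.le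
  simp only [Int.ceil_toNat, Nat.ceil_natCast_div_natCast_eq_ceilDiv]
  exact ⟨hbound, (summable_pow_ceilDiv hr0 hr1 hq).of_nonneg_of_le (fun _ => abs_nonneg _) hbound⟩
end
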